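/- arXiv:2506.14952 — 5 statements merged into one kernel-verified Lean document; each statement's English description precedes it below -/
import Mathlib

section
/- Let Y1 and Y2 be non-negative random variables (not necessarily independent) such that Y1 first-order stochastically dominates b1·Z1 where Z1 ~ χ²_d, and Y2 is first-order stochastically dominated by b2·Z2 where Z2 ~ χ²_d, with constants b1 > b2 > 0. Then for any m ∈ ℝ, Pr(Y1 − Y2 ≤ m) ≤ exp(m·(b1−b2)/(8·b1·b2)) · ((b1+b2)²/(4·b1·b2))^(−d/4). -/
open MeasureTheory ProbabilityTheory

/-- The chi-squared distribution with `d` degrees of freedom, as the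
Gamma distribution with shape `d/2` and rate `1/2`. -/
noncomputable def chiSqMeasure (d : ℕ) : Measure ℝ :=
  gammaMeasure ((d : ℝ) / 2) (1 / 2)

/-!
Chernoff bound: for `t > 0`, `P(Y1 - Y2 ≤ m) ≤ e^{tm} E[e^{-t Y1} e^{t Y2}]`. As `Y1` and `Y2` may be
dependent, the expectation is split by Cauchy–Schwarz into `E[e^{-2t Y1}]^{1/2} E[e^{2t Y2}]^{1/2}`.
Stochastic dominance transfers these monotone exponential moments to those of `b1 Z` and `b2 Z`,
which the χ² moment generating function `(1 - 2s)^{-d/2}` evaluates to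
`((1 + 4t b1)(1 - 4t b2))^{-d/4}`. The choice `t = (b1 - b2)/(8 b1 b2)` gives
`1 + 4t b1 = (b1 + b2)/(2 b2)` and `1 - 4t b2 = (b1 + b2)/(2 b1)`.
-/

open Real Set

theorem gammaPDF_mul_exp {a r c : ℝ} (ha : 0 < a) (hr : 0 < r) (hc : c < r) (z : ℝ) :
    gammaPDF a r z * ENNReal.ofReal (exp (c * z))
      = ENNReal.ofReal ((r / (r - c)) ^ a) * gammaPDF a (r - c) z := by
  have hrc : 0 < r - c := sub_pos.mpr hc
  rcases lt_or_ge z 0 with hz | hz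
  · rw [gammaPDF_of_neg hz, gammaPDF_of_neg hz, zero_mul, mul_zero]
  rw [gammaPDF_of_nonneg hz, gammaPDF_of_nonneg hz,
    ← ENNReal.ofReal_mul (by positivity), ← ENNReal.ofReal_mul (by positivity)]
  congr 1
  rw [div_rpow hr.le hrc.le, mul_assoc, mul_assoc, mul_assoc, ← exp_add,
    show -(r * z) + c * z = -((r - c) * z) by ring]
  field_simp

theorem lintegral_exp_mul_gammaMeasure {a r c : ℝ} (ha : 0 < a) (hr : 0 < r) (hc : c < r) :
    ∫⁻ z, ENNReal.ofReal (exp (c * z)) ∂gammaMeasure a r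
      = ENNReal.ofReal ((r / (r - c)) ^ a) := by
  have hmeas (s : ℝ) : Measurable (gammaPDF a s) := (measurable_gammaPDFReal a s).ennreal_ofReal
  rw [gammaMeasure, lintegral_withDensity_eq_lintegral_mul _ (hmeas r) (by fun_prop)]
  simp only [Pi.mul_apply, gammaPDF_mul_exp ha hr hc]
  rw [lintegral_const_mul _ (hmeas (r - c)),
    lintegral_gammaPDF_eq_one ha (sub_pos.mpr hc), mul_one]

theorem chiSqMeasure_zero : chiSqMeasure 0 = 0 := by
  -- The density vanishes because `Gamma 0 = 0` and division by zero gives `0`.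
  have : gammaPDF ((0 : ℕ) / 2) (1 / 2) = 0 := by
    funext x
    simp [gammaPDF_eq]
  rw [chiSqMeasure, gammaMeasure, this, withDensity_zero]

theorem isProbabilityMeasure_chiSqMeasure {d : ℕ} (hd : 0 < d) :
    IsProbabilityMeasure (chiSqMeasure d) :=
  isProbabilityMeasure_gammaMeasure (by positivity) one_half_pos

theorem lintegral_exp_mul_chiSqMeasure {d : ℕ} (hd : 0 < d) {s : ℝ} (hs : s < 1 / 2) :
    ∫⁻ z, ENNReal.ofReal (exp (s * z)) ∂chiSqMeasure d
      = ENNReal.ofReal ((1 - 2 * s) ^ (-(d : ℝ) / 2)) := by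
  rw [chiSqMeasure, lintegral_exp_mul_gammaMeasure (by positivity) one_half_pos hs,
    show (1 / 2 : ℝ) / (1 / 2 - s) = (1 - 2 * s)⁻¹ by field_simp,
    inv_rpow (by linarith), ← rpow_neg (by linarith), neg_div]

section StochasticDominance

variable {Ω Ω' : Type*} [MeasurableSpace Ω] [MeasurableSpace Ω'] {μ : Measure Ω} {ν : Measure Ω'}
  {X : Ω → ℝ} {Y : Ω' → ℝ} {c : ℝ}

theorem lintegral_exp_mul_le_of_forall_measure_le (hX : AEMeasurable X μ) (hY : AEMeasurable Y ν)
    (hc : 0 < c) (h : ∀ x, μ {ω | x ≤ X ω} ≤ ν {ω | x ≤ Y ω}) :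
    ∫⁻ ω, ENNReal.ofReal (exp (c * X ω)) ∂μ ≤ ∫⁻ ω, ENNReal.ofReal (exp (c * Y ω)) ∂ν := by
  rw [lintegral_eq_lintegral_meas_le μ (ae_of_all _ fun _ ↦ (exp_pos _).le) (by fun_prop),
    lintegral_eq_lintegral_meas_le ν (ae_of_all _ fun _ ↦ (exp_pos _).le) (by fun_prop)]
  refine setLIntegral_mono' measurableSet_Ioi fun s (hs : 0 < s) ↦ ?_
  have hlevel (u : ℝ) : s ≤ exp (c * u) ↔ log s / c ≤ u := by
    rw [div_le_iff₀' hc, log_le_iff_le_exp hs]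
  simpa only [hlevel] using h (log s / c)

theorem lintegral_exp_neg_mul_le_of_forall_measure_le [IsProbabilityMeasure μ]
    [IsProbabilityMeasure ν] (hX : AEMeasurable X μ) (hY : AEMeasurable Y ν) (hc : 0 < c)
    (h : ∀ x, ν {ω | x ≤ Y ω} ≤ μ {ω | x ≤ X ω}) :
    ∫⁻ ω, ENNReal.ofReal (exp (-(c * X ω))) ∂μ ≤ ∫⁻ ω, ENNReal.ofReal (exp (-(c * Y ω))) ∂ν := by
  rw [lintegral_eq_lintegral_meas_lt μ (ae_of_all _ fun _ ↦ (exp_pos _).le) (by fun_prop),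
    lintegral_eq_lintegral_meas_lt ν (ae_of_all _ fun _ ↦ (exp_pos _).le) (by fun_prop)]
  refine setLIntegral_mono' measurableSet_Ioi fun s (hs : 0 < s) ↦ ?_
  have hlevel (u : ℝ) : s < exp (-(c * u)) ↔ ¬ -log s / c ≤ u := by
    rw [not_le, lt_div_iff₀ hc, ← log_lt_iff_lt_exp hs]
    constructor <;> intro <;> linarith
  simp only [hlevel, ← compl_ofPred]
  rw [prob_compl_eq_one_sub₀ (nullMeasurableSet_le aemeasurable_const hX),
    prob_compl_eq_one_sub₀ (nullMeasurableSet_le aemeasurable_const hY)]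
  exact tsub_le_tsub_left (h _) 1

end StochasticDominance

theorem measure_sub_le_le_exp_mul_sqrt_lintegral {Ω : Type*} [MeasurableSpace Ω] (μ : Measure Ω)
    {X Y : Ω → ℝ} (hX : AEMeasurable X μ) (hY : AEMeasurable Y μ) {t : ℝ} (ht : 0 ≤ t) (m : ℝ) :
    μ {ω | X ω - Y ω ≤ m} ≤ ENNReal.ofReal (exp (t * m)) *
      ((∫⁻ ω, ENNReal.ofReal (exp (-(2 * t * X ω))) ∂μ) ^ (1 / 2 : ℝ) *
        (∫⁻ ω, ENNReal.ofReal (exp (2 * t * Y ω)) ∂μ) ^ (1 / 2 : ℝ)) := by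
  set f : Ω → ENNReal := fun ω ↦ ENNReal.ofReal (exp (-(t * X ω)))
  set g : Ω → ENNReal := fun ω ↦ ENNReal.ofReal (exp (t * Y ω))
  have hsq (u : ℝ) : ENNReal.ofReal (exp u) ^ (2 : ℝ) = ENNReal.ofReal (exp (2 * u)) := by
    rw [ENNReal.ofReal_rpow_of_pos (exp_pos u), ← exp_mul, mul_comm]
  have hfg (ω : Ω) : ENNReal.ofReal (exp (t * m)) * (f * g) ω
      = ENNReal.ofReal (exp (t * (m - (X ω - Y ω)))) := by
    simp only [f, g, Pi.mul_apply, ← ENNReal.ofReal_mul (exp_pos _).le, ← exp_add]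
    ring_nf
  calc μ {ω | X ω - Y ω ≤ m}
      ≤ μ {ω | 1 ≤ ENNReal.ofReal (exp (t * m)) * (f * g) ω} := by
        refine measure_mono fun ω (hω : X ω - Y ω ≤ m) ↦ ?_
        rw [mem_ofPred_eq, hfg, ← ENNReal.ofReal_one, ← exp_zero]
        exact ENNReal.ofReal_le_ofReal (exp_le_exp.mpr (by nlinarith))
    _ ≤ ∫⁻ ω, ENNReal.ofReal (exp (t * m)) * (f * g) ω ∂μ := by
        simpa using mul_meas_ge_le_lintegral₀ (by fun_prop) 1
    _ = ENNReal.ofReal (exp (t * m)) * ∫⁻ ω, (f * g) ω ∂μ :=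
        lintegral_const_mul' _ _ ENNReal.ofReal_ne_top
    _ ≤ ENNReal.ofReal (exp (t * m)) *
          ((∫⁻ ω, f ω ^ (2 : ℝ) ∂μ) ^ (1 / 2 : ℝ) * (∫⁻ ω, g ω ^ (2 : ℝ) ∂μ) ^ (1 / 2 : ℝ)) := by
        gcongr
        exact ENNReal.lintegral_mul_le_Lp_mul_Lq μ .two_two (by fun_prop) (by fun_prop)
    _ = _ := by simp only [f, g, hsq, mul_neg, mul_assoc]

theorem measure_sub_le_le_of_chiSq_dominance {Ω : Type*} [MeasurableSpace Ω] {μ : Measure Ω}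
    [IsProbabilityMeasure μ] {d : ℕ} (hd : 0 < d) {b1 b2 : ℝ} (t m : ℝ) {Y1 Y2 : Ω → ℝ}
    (hY1m : Measurable Y1) (hY2m : Measurable Y2)
    (hFSD1 : ∀ x : ℝ, chiSqMeasure d {z | x ≤ b1 * z} ≤ μ {ω | x ≤ Y1 ω})
    (hFSD2 : ∀ x : ℝ, μ {ω | x ≤ Y2 ω} ≤ chiSqMeasure d {z | x ≤ b2 * z})
    (ht : 0 < t) (htb1 : 0 < 1 + 4 * t * b1) (htb2 : 0 < 1 - 4 * t * b2) :
    μ {ω | Y1 ω - Y2 ω ≤ m}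
      ≤ ENNReal.ofReal (exp (t * m) * ((1 + 4 * t * b1) * (1 - 4 * t * b2)) ^ (-(d : ℝ) / 4)) := by
  have := isProbabilityMeasure_chiSqMeasure hd
  have hmgf1 : ∫⁻ ω, ENNReal.ofReal (exp (-(2 * t * Y1 ω))) ∂μ
      ≤ ENNReal.ofReal ((1 + 4 * t * b1) ^ (-(d : ℝ) / 2)) :=
    calc _ ≤ ∫⁻ z, ENNReal.ofReal (exp (-(2 * t * (b1 * z)))) ∂chiSqMeasure d :=
          lintegral_exp_neg_mul_le_of_forall_measure_le hY1m.aemeasurable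
            (by fun_prop) (by positivity) hFSD1
      _ = ENNReal.ofReal ((1 + 4 * t * b1) ^ (-(d : ℝ) / 2)) := by
          simp only [show ∀ z, -(2 * t * (b1 * z)) = -(2 * t * b1) * z by intro; ring]
          rw [lintegral_exp_mul_chiSqMeasure hd (by linarith)]
          ring_nf
  have hmgf2 : ∫⁻ ω, ENNReal.ofReal (exp (2 * t * Y2 ω)) ∂μ
      ≤ ENNReal.ofReal ((1 - 4 * t * b2) ^ (-(d : ℝ) / 2)) :=
    calc _ ≤ ∫⁻ z, ENNReal.ofReal (exp (2 * t * (b2 * z))) ∂chiSqMeasure d :=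
          lintegral_exp_mul_le_of_forall_measure_le hY2m.aemeasurable
            (by fun_prop) (by positivity) hFSD2
      _ = ENNReal.ofReal ((1 - 4 * t * b2) ^ (-(d : ℝ) / 2)) := by
          simp only [show ∀ z, 2 * t * (b2 * z) = 2 * t * b2 * z by intro; ring]
          rw [lintegral_exp_mul_chiSqMeasure hd (by linarith)]
          ring_nf
  have hsqrt {x : ℝ} (hx : 0 < x) :
      ENNReal.ofReal (x ^ (-(d : ℝ) / 2)) ^ (1 / 2 : ℝ) = ENNReal.ofReal (x ^ (-(d : ℝ) / 4)) := by
    rw [ENNReal.ofReal_rpow_of_pos (by positivity), ← rpow_mul hx.le]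
    ring_nf
  calc μ {ω | Y1 ω - Y2 ω ≤ m}
      ≤ ENNReal.ofReal (exp (t * m)) *
          ((∫⁻ ω, ENNReal.ofReal (exp (-(2 * t * Y1 ω))) ∂μ) ^ (1 / 2 : ℝ) *
            (∫⁻ ω, ENNReal.ofReal (exp (2 * t * Y2 ω)) ∂μ) ^ (1 / 2 : ℝ)) :=
        measure_sub_le_le_exp_mul_sqrt_lintegral μ hY1m.aemeasurable hY2m.aemeasurable ht.le m
    _ ≤ ENNReal.ofReal (exp (t * m)) *
          (ENNReal.ofReal ((1 + 4 * t * b1) ^ (-(d : ℝ) / 2)) ^ (1 / 2 : ℝ) *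
            ENNReal.ofReal ((1 - 4 * t * b2) ^ (-(d : ℝ) / 2)) ^ (1 / 2 : ℝ)) := by
        gcongr
    _ = _ := by
        rw [hsqrt htb1, hsqrt htb2, ← ENNReal.ofReal_mul (by positivity),
          ← ENNReal.ofReal_mul (by positivity), mul_rpow htb1.le htb2.le]

theorem stmt_0_general {Ω : Type*} [MeasurableSpace Ω] (μ : Measure Ω) [IsProbabilityMeasure μ]
    (d : ℕ) (b1 b2 m : ℝ) (hb12 : b1 > b2) (hb2 : b2 > 0)
    (Y1 Y2 : Ω → ℝ) (hY1m : Measurable Y1) (hY2m : Measurable Y2)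
    (hY2nn : ∀ ω, 0 ≤ Y2 ω)
    -- Y1 ⪰_FSD b1 · Z1 with Z1 ~ χ²_d
    (hFSD1 : ∀ x : ℝ, chiSqMeasure d {z | x ≤ b1 * z} ≤ μ {ω | x ≤ Y1 ω})
    -- Y2 ⪯_FSD b2 · Z2 with Z2 ~ χ²_d
    (hFSD2 : ∀ x : ℝ, μ {ω | x ≤ Y2 ω} ≤ chiSqMeasure d {z | x ≤ b2 * z}) :
    (μ {ω | Y1 ω - Y2 ω ≤ m}).toReal ≤
      Real.exp (m * (b1 - b2) / (8 * b1 * b2)) *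
        ((b1 + b2) ^ 2 / (4 * b1 * b2)) ^ (-(d : ℝ) / 4) := by
  rcases d.eq_zero_or_pos with rfl | hd
  · -- `χ²_0` is the zero measure, so `hFSD2 0` would give `μ univ ≤ 0`.
    simpa [chiSqMeasure_zero, hY2nn] using hFSD2 0
  have hb1 : 0 < b1 := hb2.trans hb12
  set t := (b1 - b2) / (8 * b1 * b2)
  have htb1 : 1 + 4 * t * b1 = (b1 + b2) / (2 * b2) := by simp only [t]; field_simp; ring
  have htb2 : 1 - 4 * t * b2 = (b1 + b2) / (2 * b1) := by simp only [t]; field_simp; ring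
  have hbound := measure_sub_le_le_of_chiSq_dominance hd t m hY1m hY2m hFSD1 hFSD2
    (by positivity) (by rw [htb1]; positivity) (by rw [htb2]; positivity)
  have hprod : (1 + 4 * t * b1) * (1 - 4 * t * b2) = (b1 + b2) ^ 2 / (4 * b1 * b2) := by
    rw [htb1, htb2]; field_simp; ring
  rw [hprod, mul_comm t m, ← mul_div_assoc] at hbound
  exact ENNReal.toReal_le_of_le_ofReal (by positivity) hbound

theorem stmt_0 {Ω : Type*} [MeasurableSpace Ω] (μ : Measure Ω) [IsProbabilityMeasure μ]
    (d : ℕ) (b1 b2 m : ℝ) (hb12 : b1 > b2) (hb2 : b2 > 0)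
    (Y1 Y2 : Ω → ℝ) (hY1m : Measurable Y1) (hY2m : Measurable Y2)
    (hY1nn : ∀ ω, 0 ≤ Y1 ω) (hY2nn : ∀ ω, 0 ≤ Y2 ω)
    -- Y1 ⪰_FSD b1 · Z1 with Z1 ~ χ²_d
    (hFSD1 : ∀ x : ℝ, chiSqMeasure d {z | x ≤ b1 * z} ≤ μ {ω | x ≤ Y1 ω})
    -- Y2 ⪯_FSD b2 · Z2 with Z2 ~ χ²_d
    (hFSD2 : ∀ x : ℝ, μ {ω | x ≤ Y2 ω} ≤ chiSqMeasure d {z | x ≤ b2 * z}) :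
    (μ {ω | Y1 ω - Y2 ω ≤ m}).toReal ≤
      Real.exp (m * (b1 - b2) / (8 * b1 * b2)) *
        ((b1 + b2) ^ 2 / (4 * b1 * b2)) ^ (-(d : ℝ) / 4) :=
  stmt_0_general μ d b1 b2 m hb12 hb2 Y1 Y2 hY1m hY2m hY2nn hFSD1 hFSD2
end

section
/- Let μ_T, μ_W ∈ ℝ^d be i.i.d. N(0, τ²·I_d) and let x = μ_T + ξ with ξ ~ N(0, σ²·I_d) independent of the centers. Then Pr(‖x − μ_W‖² − ‖x − μ_T‖² ≤ 0) ≤ ρ^(d/4), where ρ = (1 + 2τ²/σ²)/(1 + τ²/σ²)². -/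
/-!
Write `a, b, c` for the coordinates of `μT, μW, ξ`. Then `‖x - μW‖² - ‖x - μT‖²` is the sum over
coordinates of the i.i.d. terms `(a + c - b)² - c²`, so a Chernoff bound with parameter `t` reduces
the claim to the single Gaussian integral `E exp (-t ((a + c - b)² - c²))`. Integrating out `c`
(a Gaussian moment generating function) leaves `E exp (-(t - 2 t² σ²) (a - b)²)`, and since
`a - b ~ N(0, 2τ²)` this equals `(1 + 4 (t - 2 t² σ²) τ²)^(-1/2)`. The optimal `t = 1 / (4σ²)`
gives the bound `(1 + τ² / (2σ²))^(-d/2)`, which is at most `ρ^(d/4)` because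
`(1 + r)² ≤ (1 + 2r) (1 + r/2)²`.
-/

open MeasureTheory ProbabilityTheory Real
open scoped NNReal ENNReal

lemma exp_neg_mul_sq_add_mul_eq {K : ℝ} (hK : 0 < K) (l x : ℝ) :
    exp (-(K * x ^ 2) + l * x) = exp (-K * (x - l / (2 * K)) ^ 2) * exp (l ^ 2 / (4 * K)) := by
  rw [← exp_add]; congr 1; field_simp; ring

lemma integrable_exp_neg_mul_sq_add_mul {K : ℝ} (hK : 0 < K) (l : ℝ) :
    Integrable fun x : ℝ ↦ exp (-(K * x ^ 2) + l * x) := by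
  simp_rw [exp_neg_mul_sq_add_mul_eq hK]
  exact ((integrable_exp_neg_mul_sq hK).comp_sub_right _).mul_const _

lemma integral_exp_neg_mul_sq_add_mul {K : ℝ} (hK : 0 < K) (l : ℝ) :
    ∫ x : ℝ, exp (-(K * x ^ 2) + l * x) = √(π / K) * exp (l ^ 2 / (4 * K)) := by
  simp_rw [exp_neg_mul_sq_add_mul_eq hK]
  rw [integral_mul_const, integral_sub_right_eq_self (fun x ↦ exp (-K * x ^ 2)),
    integral_gaussian]

lemma lintegral_exp_quadratic_gaussianReal {v : ℝ≥0} (hv : v ≠ 0) {k : ℝ}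
    (hk : 0 < 1 + 2 * k * v) (l : ℝ) :
    ∫⁻ x, ENNReal.ofReal (exp (-(k * x ^ 2) + l * x)) ∂gaussianReal 0 v =
      ENNReal.ofReal ((√(1 + 2 * k * v))⁻¹ * exp (l ^ 2 * v / (2 * (1 + 2 * k * v)))) := by
  have hv' : (0 : ℝ) < v := by positivity
  obtain ⟨K, hKdef⟩ : ∃ K, K = (1 + 2 * k * v) / (2 * v) := ⟨_, rfl⟩
  have hK : 0 < K := hKdef ▸ by positivity
  have hdensity : ∀ x, gaussianPDF 0 v x * ENNReal.ofReal (exp (-(k * x ^ 2) + l * x)) =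
      ENNReal.ofReal ((√(2 * π * v))⁻¹ * exp (-(K * x ^ 2) + l * x)) := by
    intro x
    rw [gaussianPDF, gaussianPDFReal, ← ENNReal.ofReal_mul (by positivity), mul_assoc,
      ← exp_add]
    congr 3
    rw [hKdef]; field_simp; ring
  rw [gaussianReal_of_var_ne_zero 0 hv, lintegral_withDensity_eq_lintegral_mul₀
    (measurable_gaussianPDF 0 v).aemeasurable (by fun_prop)]
  simp_rw [Pi.mul_apply, hdensity]
  rw [← ofReal_integral_eq_lintegral_ofReal
    ((integrable_exp_neg_mul_sq_add_mul hK l).const_mul _) (.of_forall fun x ↦ by positivity),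
    integral_const_mul, integral_exp_neg_mul_sq_add_mul hK, ← mul_assoc]
  congr 2
  · rw [← sqrt_inv, ← sqrt_mul (by positivity), ← sqrt_inv]
    congr 1
    rw [hKdef]; field_simp
  · rw [hKdef]; congr 1; field_simp; ring

lemma lintegral_exp_neg_sq_add_sub_sq_gaussianReal {w : ℝ≥0} (hw : w ≠ 0) (u : ℝ) :
    ∫⁻ c, ENNReal.ofReal (exp (-((4 * w : ℝ)⁻¹ * ((u + c) ^ 2 - c ^ 2))))
        ∂gaussianReal 0 w = ENNReal.ofReal (exp (-((8 * w : ℝ)⁻¹ * u ^ 2))) := by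
  have hw' : (0 : ℝ) < w := by positivity
  have hsplit : ∀ c, ENNReal.ofReal (exp (-((4 * w : ℝ)⁻¹ * ((u + c) ^ 2 - c ^ 2)))) =
      ENNReal.ofReal (exp (-(0 * c ^ 2) + -(u / (2 * w)) * c)) *
        ENNReal.ofReal (exp (-(u ^ 2 / (4 * w)))) := by
    intro c
    rw [← ENNReal.ofReal_mul (by positivity), ← exp_add]
    congr 2
    field_simp; ring
  simp_rw [hsplit]
  rw [lintegral_mul_const _ (by fun_prop),
    lintegral_exp_quadratic_gaussianReal hw (by simp), ← ENNReal.ofReal_mul (by positivity)]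
  congr 1
  rw [mul_zero, zero_mul, add_zero, sqrt_one, inv_one, one_mul, ← exp_add]
  congr 1
  field_simp; ring

lemma lintegral_exp_neg_mul_sq_sub_gaussianReal_prod {v w : ℝ≥0} (hv : v ≠ 0) (hw : w ≠ 0)
    {α : ℝ} (hα : 0 ≤ α) :
    ∫⁻ p, ENNReal.ofReal (exp (-(α * (p.1 - p.2) ^ 2)))
        ∂(gaussianReal 0 v).prod (gaussianReal 0 w) =
      ENNReal.ofReal (√(1 + 2 * α * (v + w)))⁻¹ := by
  have hv' : (0 : ℝ) < v := by positivity
  have hw' : (0 : ℝ) < w := by positivity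
  have hαw : 0 < 1 + 2 * α * w := by positivity
  obtain ⟨β, hβ⟩ : ∃ β, β = α / (1 + 2 * α * w) := ⟨_, rfl⟩
  have hβv : 0 < 1 + 2 * β * v := hβ ▸ by positivity
  have hinner : ∀ a, ∫⁻ b, ENNReal.ofReal (exp (-(α * (a - b) ^ 2))) ∂gaussianReal 0 w =
      ENNReal.ofReal (√(1 + 2 * α * w))⁻¹ * ENNReal.ofReal (exp (-(β * a ^ 2) + 0 * a)) := by
    intro a
    have hsplit : ∀ b, ENNReal.ofReal (exp (-(α * (a - b) ^ 2))) =
        ENNReal.ofReal (exp (-(α * b ^ 2) + 2 * α * a * b)) *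
          ENNReal.ofReal (exp (-(α * a ^ 2))) := by
      intro b
      rw [← ENNReal.ofReal_mul (by positivity), ← exp_add]
      congr 2; ring
    simp_rw [hsplit]
    rw [lintegral_mul_const _ (by fun_prop), lintegral_exp_quadratic_gaussianReal hw hαw,
      ← ENNReal.ofReal_mul (by positivity), ← ENNReal.ofReal_mul (by positivity), mul_assoc,
      ← exp_add]
    congr 3
    rw [hβ]; field_simp; ring
  rw [lintegral_prod _ (by fun_prop)]
  simp_rw [hinner]
  rw [lintegral_const_mul _ (by fun_prop), lintegral_exp_quadratic_gaussianReal hv hβv,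
    ← ENNReal.ofReal_mul (by positivity)]
  congr 1
  rw [zero_pow two_ne_zero, zero_mul, zero_div, exp_zero, mul_one, ← mul_inv,
    ← sqrt_mul hαw.le]
  congr 2
  rw [hβ]; field_simp; ring

-- For `p = ((a, b), c)` and `x = a + c`, this is `(x - b)² - (x - a)²`.
def sqDistGap (p : (ℝ × ℝ) × ℝ) : ℝ := (p.1.1 + p.2 - p.1.2) ^ 2 - p.2 ^ 2

@[fun_prop]
lemma measurable_sqDistGap : Measurable sqDistGap := by
  unfold sqDistGap; fun_prop

lemma lintegral_exp_sqDistGap_gaussianReal {v w : ℝ≥0} (hv : v ≠ 0) (hw : w ≠ 0) :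
    ∫⁻ p, ENNReal.ofReal (exp (-((4 * w : ℝ)⁻¹ * sqDistGap p)))
        ∂((gaussianReal 0 v).prod (gaussianReal 0 v)).prod (gaussianReal 0 w) =
      ENNReal.ofReal (√(1 + v / (2 * w)))⁻¹ := by
  have hinner : ∀ p : ℝ × ℝ,
      ∫⁻ c, ENNReal.ofReal (exp (-((4 * w : ℝ)⁻¹ * sqDistGap (p, c)))) ∂gaussianReal 0 w =
        ENNReal.ofReal (exp (-((8 * w : ℝ)⁻¹ * (p.1 - p.2) ^ 2))) := by
    intro p
    simp_rw [sqDistGap, add_sub_right_comm p.1 _ p.2]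
    exact lintegral_exp_neg_sq_add_sub_sq_gaussianReal hw _
  rw [lintegral_prod _ (by fun_prop)]
  simp_rw [hinner]
  rw [lintegral_exp_neg_mul_sq_sub_gaussianReal_prod hv hv (by positivity)]
  congr 3
  field_simp
  ring

lemma lintegral_fintype_prod_eq_prod {ι : Type*} [Fintype ι] {α : ι → Type*}
    [∀ i, MeasurableSpace (α i)] {μ : (i : ι) → Measure (α i)}
    [∀ i, IsProbabilityMeasure (μ i)] {f : (i : ι) → α i → ℝ≥0∞} (hf : ∀ i, Measurable (f i)) :
    ∫⁻ x, ∏ i, f i (x i) ∂Measure.pi μ = ∏ i, ∫⁻ y, f i y ∂μ i := by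
  rw [lintegral_prod_eq_prod_lintegral_of_indepFun _ _
    (iIndepFun_pi fun i ↦ (hf i).aemeasurable) fun i ↦ (hf i).comp (measurable_pi_apply i)]
  exact Finset.prod_congr rfl fun i _ ↦ (measurePreserving_eval μ i).lintegral_comp (hf i)

lemma map_pi_prodMk_eq_pi_prod {Ω ι α β : Type*} [MeasurableSpace Ω] [MeasurableSpace α]
    [MeasurableSpace β] [Fintype ι] {P : Measure Ω} {μ : ι → Measure α} {ν : ι → Measure β}
    [∀ i, SigmaFinite (μ i)] [∀ i, SigmaFinite (ν i)] {X : Ω → ι → α} {Y : Ω → ι → β}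
    (hXm : AEMeasurable X P) (hYm : AEMeasurable Y P) (hX : P.map X = Measure.pi μ)
    (hY : P.map Y = Measure.pi ν) (hXY : IndepFun X Y P) :
    P.map (fun ω i ↦ (X ω i, Y ω i)) = Measure.pi fun i ↦ (μ i).prod (ν i) := by
  have hpair : P.map (fun ω ↦ (X ω, Y ω)) = (Measure.pi μ).prod (Measure.pi ν) := by
    rw [(indepFun_iff_map_prod_eq_prod_map_map' hXm hYm (hX ▸ inferInstance)
      (hY ▸ inferInstance)).1 hXY, hX, hY]
  have he := (measurePreserving_arrowProdEquivProdArrow α β ι μ ν).symm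
  rw [← he.map_eq, ← hpair, AEMeasurable.map_map_of_aemeasurable he.measurable.aemeasurable
    (hXm.prodMk hYm)]
  rfl

lemma map_pi_prodMk_prodMk_eq_pi_prod {Ω ι α : Type*} [MeasurableSpace Ω] [MeasurableSpace α]
    [Fintype ι] {P : Measure Ω} {μ ν ρ : ι → Measure α}
    [∀ i, IsProbabilityMeasure (μ i)] [∀ i, IsProbabilityMeasure (ν i)]
    [∀ i, IsProbabilityMeasure (ρ i)] {X Y Z : Ω → ι → α}
    (hX : P.map X = Measure.pi μ) (hY : P.map Y = Measure.pi ν) (hZ : P.map Z = Measure.pi ρ)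
    (hXYZ : iIndepFun ![X, Y, Z] P) :
    P.map (fun ω i ↦ ((X ω i, Y ω i), Z ω i)) =
      Measure.pi fun i ↦ ((μ i).prod (ν i)).prod (ρ i) := by
  have hXm : AEMeasurable X P := .of_map_ne_zero (hX ▸ NeZero.ne _)
  have hYm : AEMeasurable Y P := .of_map_ne_zero (hY ▸ NeZero.ne _)
  have hZm : AEMeasurable Z P := .of_map_ne_zero (hZ ▸ NeZero.ne _)
  have hm : ∀ i, AEMeasurable (![X, Y, Z] i) P := by
    intro i; fin_cases i <;> assumption
  have hXY : P.map (fun ω i ↦ (X ω i, Y ω i)) = Measure.pi fun i ↦ (μ i).prod (ν i) :=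
    map_pi_prodMk_eq_pi_prod hXm hYm hX hY
      (by simpa using hXYZ.indepFun (i := 0) (j := 1) (by decide))
  have hXYZ' : IndepFun (fun ω i ↦ (X ω i, Y ω i)) Z P := by
    have h := hXYZ.indepFun_prodMk₀ hm 0 1 2 (by decide) (by decide)
    simp only [Matrix.cons_val_zero, Matrix.cons_val_one, Matrix.cons_val_two] at h
    exact h.comp (MeasurableEquiv.arrowProdEquivProdArrow α α ι).symm.measurable measurable_id
  exact map_pi_prodMk_eq_pi_prod (by fun_prop) hZm hXY hZ hXYZ'

lemma measure_nonpos_le_lintegral_exp {α : Type*} [MeasurableSpace α] {μ : Measure α}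
    {f : α → ℝ} (hf : AEMeasurable f μ) {t : ℝ} (ht : 0 ≤ t) :
    μ {x | f x ≤ 0} ≤ ∫⁻ x, ENNReal.ofReal (exp (-(t * f x))) ∂μ := by
  calc μ {x | f x ≤ 0} ≤ μ {x | 1 ≤ ENNReal.ofReal (exp (-(t * f x)))} :=
        measure_mono fun x (hx : f x ≤ 0) ↦ by
          simpa using mul_nonpos_of_nonneg_of_nonpos ht hx
    _ ≤ ∫⁻ x, ENNReal.ofReal (exp (-(t * f x))) ∂μ := by
        simpa using mul_meas_ge_le_lintegral₀
          (f := fun x ↦ ENNReal.ofReal (exp (-(t * f x)))) (by fun_prop) 1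

lemma pi_sum_nonpos_le_lintegral_exp_pow {ι α : Type*} [Fintype ι] [MeasurableSpace α]
    {ρ : Measure α} [IsProbabilityMeasure ρ] {g : α → ℝ} (hg : Measurable g) {t : ℝ}
    (ht : 0 ≤ t) :
    (Measure.pi fun _ : ι ↦ ρ) {z | ∑ i, g (z i) ≤ 0} ≤
      (∫⁻ a, ENNReal.ofReal (exp (-(t * g a))) ∂ρ) ^ Fintype.card ι := by
  calc (Measure.pi fun _ : ι ↦ ρ) {z | ∑ i, g (z i) ≤ 0}
      ≤ ∫⁻ z, ENNReal.ofReal (exp (-(t * ∑ i, g (z i)))) ∂Measure.pi fun _ ↦ ρ :=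
        measure_nonpos_le_lintegral_exp
          (Finset.measurable_sum _ fun i _ ↦ hg.comp (measurable_pi_apply i)).aemeasurable ht
    _ = ∫⁻ z, ∏ i, ENNReal.ofReal (exp (-(t * g (z i)))) ∂Measure.pi fun _ ↦ ρ := by
        refine lintegral_congr fun z ↦ ?_
        simp_rw [Finset.mul_sum, ← Finset.sum_neg_distrib, exp_sum]
        exact ENNReal.ofReal_prod_of_nonneg fun i _ ↦ (exp_pos _).le
    _ = _ := by
        rw [lintegral_fintype_prod_eq_prod (f := fun _ a ↦ ENNReal.ofReal (exp (-(t * g a))))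
          fun _ ↦ by fun_prop, Finset.prod_const, Finset.card_univ]

-- `t = 1 / (4w)` is the optimal Chernoff parameter.
lemma pi_sum_sqDistGap_nonpos_le {ι : Type*} [Fintype ι] {v w : ℝ≥0} (hv : v ≠ 0)
    (hw : w ≠ 0) :
    (Measure.pi fun _ : ι ↦ ((gaussianReal 0 v).prod (gaussianReal 0 v)).prod (gaussianReal 0 w))
        {z | ∑ i, sqDistGap (z i) ≤ 0} ≤
      ENNReal.ofReal ((√(1 + v / (2 * w)))⁻¹ ^ Fintype.card ι) := by
  rw [ENNReal.ofReal_pow (by positivity), ← lintegral_exp_sqDistGap_gaussianReal hv hw]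
  exact pi_sum_nonpos_le_lintegral_exp_pow measurable_sqDistGap (by positivity)

lemma inv_sqrt_one_add_half_pow_le {r : ℝ} (hr : 0 ≤ r) (d : ℕ) :
    (√(1 + r / 2))⁻¹ ^ d ≤ ((1 + 2 * r) / (1 + r) ^ 2) ^ ((d : ℝ) / 4) := by
  have hu : 0 < 1 + r / 2 := by positivity
  have hpow : (√(1 + r / 2))⁻¹ ^ d = ((1 + r / 2) ^ 2)⁻¹ ^ ((d : ℝ) / 4) := by
    rw [inv_rpow (by positivity), inv_pow, sqrt_eq_rpow, ← rpow_mul_natCast hu.le,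
      ← rpow_natCast, ← rpow_mul hu.le]
    congr 2
    push_cast; ring
  have hbase : ((1 + r / 2) ^ 2)⁻¹ ≤ (1 + 2 * r) / (1 + r) ^ 2 := by
    rw [inv_eq_one_div, div_le_div_iff₀ (by positivity) (by positivity)]
    nlinarith [pow_nonneg hr 2, pow_nonneg hr 3]
  rw [hpow]
  exact rpow_le_rpow (by positivity) hbase (by positivity)

theorem stmt_5_general {Ω : Type*} [MeasurableSpace Ω] (P : Measure Ω)
    (d : ℕ) (τ σ : ℝ) (hτ : 0 < τ) (hσ : 0 < σ)
    (μT μW ξ : Ω → (Fin d → ℝ))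
    (hμT : Measure.map μT P = Measure.pi fun _ => gaussianReal 0 (τ ^ 2).toNNReal)
    (hμW : Measure.map μW P = Measure.pi fun _ => gaussianReal 0 (τ ^ 2).toNNReal)
    (hξ : Measure.map ξ P = Measure.pi fun _ => gaussianReal 0 (σ ^ 2).toNNReal)
    (hindep : iIndepFun ![μT, μW, ξ] P)
    (x : Ω → Fin d → ℝ) (hx : ∀ ω i, x ω i = μT ω i + ξ ω i) :
    (P {ω | ∑ i, (x ω i - μW ω i) ^ 2 - ∑ i, (x ω i - μT ω i) ^ 2 ≤ 0}).toReal ≤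
      ((1 + 2 * τ ^ 2 / σ ^ 2) / (1 + τ ^ 2 / σ ^ 2) ^ 2) ^ ((d : ℝ) / 4) := by
  have hv0 : (τ ^ 2).toNNReal ≠ 0 := by simpa using hτ.ne'
  have hw0 : (σ ^ 2).toNNReal ≠ 0 := by simpa using hσ.ne'
  have hlaw := map_pi_prodMk_prodMk_eq_pi_prod hμT hμW hξ hindep
  have hevent : {ω | ∑ i, (x ω i - μW ω i) ^ 2 - ∑ i, (x ω i - μT ω i) ^ 2 ≤ 0} =
      (fun ω i ↦ ((μT ω i, μW ω i), ξ ω i)) ⁻¹' {z | ∑ i, sqDistGap (z i) ≤ 0} := by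
    ext ω
    simp only [Set.mem_preimage, Set.mem_ofPred_eq, ← Finset.sum_sub_distrib, hx, sqDistGap,
      add_sub_cancel_left]
  have hbound := pi_sum_sqDistGap_nonpos_le (ι := Fin d) hv0 hw0
  rw [← hlaw, Measure.map_apply_of_aemeasurable (.of_map_ne_zero (hlaw ▸ NeZero.ne _))
    (measurableSet_le (by fun_prop) measurable_const), ← hevent, Fintype.card_fin,
    Real.coe_toNNReal _ (sq_nonneg τ), Real.coe_toNNReal _ (sq_nonneg σ),
    show τ ^ 2 / (2 * σ ^ 2) = τ ^ 2 / σ ^ 2 / 2 by ring] at hbound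
  rw [mul_div_assoc]
  exact (ENNReal.toReal_le_of_le_ofReal (by positivity) hbound).trans
    (inv_sqrt_one_add_half_pow_le (by positivity) d)

theorem stmt_5 {Ω : Type*} [MeasurableSpace Ω] (P : Measure Ω) [IsProbabilityMeasure P]
    (d : ℕ) (hd : 1 ≤ d) (τ σ : ℝ) (hτ : 0 < τ) (hσ : 0 < σ)
    (μT μW ξ : Ω → (Fin d → ℝ))
    (hμT : Measure.map μT P = Measure.pi fun _ => gaussianReal 0 (τ ^ 2).toNNReal)
    (hμW : Measure.map μW P = Measure.pi fun _ => gaussianReal 0 (τ ^ 2).toNNReal)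
    (hξ : Measure.map ξ P = Measure.pi fun _ => gaussianReal 0 (σ ^ 2).toNNReal)
    (hindep : iIndepFun ![μT, μW, ξ] P)
    (x : Ω → Fin d → ℝ) (hx : ∀ ω i, x ω i = μT ω i + ξ ω i) :
    (P {ω | ∑ i, (x ω i - μW ω i) ^ 2 - ∑ i, (x ω i - μT ω i) ^ 2 ≤ 0}).toReal ≤
      ((1 + 2 * τ ^ 2 / σ ^ 2) / (1 + τ ^ 2 / σ ^ 2) ^ 2) ^ ((d : ℝ) / 4) :=
  stmt_5_general P d τ σ hτ hσ μT μW ξ hμT hμW hξ hindep x hx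
end

section
/- Let σ, τ > 0 and integers s_C ≥ 2, s_T ≥ 1 satisfy σ > √2·τ·(s_C−1)/√(s_C²/s_T + s_C). Define ρ = 4σ²·(s_C−1)·s_C²·s_T·(s_T+1)·(s_C·(σ²+2τ²) − 2τ²) / (−s_C·(σ²+4τ²)·s_T + s_C²·(σ² + 2(σ²+τ²)·s_T) + 2τ²·s_T)². Then 0 ≤ ρ < 1. -/
/-! The square of the denominator of `ρ` equals its numerator `N` plus `X ^ 2`, where
`X = σ² s_C (s_T + s_C) - 2 τ² s_T (s_C - 1)² = s_C² s_T (a_T - a_C)`. Hence `ρ = N / (N + X²)`,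
which lies in `[0, 1)` because `N ≥ 0` and the hypothesis on `σ` says precisely that `X > 0`. -/

lemma rho_denom_sq_eq (c t σ τ : ℝ) :
    (-c * (σ ^ 2 + 4 * τ ^ 2) * t + c ^ 2 * (σ ^ 2 + 2 * (σ ^ 2 + τ ^ 2) * t) + 2 * τ ^ 2 * t) ^ 2 =
      4 * σ ^ 2 * (c - 1) * c ^ 2 * t * (t + 1) * (c * (σ ^ 2 + 2 * τ ^ 2) - 2 * τ ^ 2) +
        (σ ^ 2 * (c * (t + c)) - 2 * τ ^ 2 * t * (c - 1) ^ 2) ^ 2 := by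
  ring

lemma rho_num_nonneg {c t : ℝ} (hc : 1 ≤ c) (ht : 0 ≤ t) (σ τ : ℝ) :
    0 ≤ 4 * σ ^ 2 * (c - 1) * c ^ 2 * t * (t + 1) * (c * (σ ^ 2 + 2 * τ ^ 2) - 2 * τ ^ 2) := by
  have hlast : 0 ≤ c * (σ ^ 2 + 2 * τ ^ 2) - 2 * τ ^ 2 := by
    nlinarith [sq_nonneg σ, sq_nonneg τ]
  have hc1 : 0 ≤ c - 1 := by linarith
  positivity

lemma sq_lt_sq_mul_of_div_sqrt_lt {a b σ : ℝ} (ha : 0 ≤ a) (hb : 0 < b) (h : a / √b < σ) :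
    a ^ 2 < σ ^ 2 * b := by
  have hlt : a < σ * √b := (div_lt_iff₀ (Real.sqrt_pos.mpr hb)).mp h
  calc a ^ 2 < (σ * √b) ^ 2 := pow_lt_pow_left₀ hlt ha two_ne_zero
    _ = σ ^ 2 * b := by rw [mul_pow, Real.sq_sqrt hb.le]

lemma rho_gap_pos {c t σ τ : ℝ} (hc : 1 ≤ c) (ht : 0 < t) (hτ : 0 ≤ τ)
    (h : √2 * τ * (c - 1) / √(c ^ 2 / t + c) < σ) :
    0 < σ ^ 2 * (c * (t + c)) - 2 * τ ^ 2 * t * (c - 1) ^ 2 := by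
  have hc1 : 0 ≤ c - 1 := by linarith
  have hsq := sq_lt_sq_mul_of_div_sqrt_lt (by positivity) (by positivity) h
  rw [mul_pow, mul_pow, Real.sq_sqrt zero_le_two] at hsq
  have hmul := mul_lt_mul_of_pos_right hsq ht
  rw [mul_assoc (σ ^ 2), add_mul, div_mul_cancel₀ _ ht.ne'] at hmul
  linarith

lemma div_add_sq_nonneg_and_lt_one {N X : ℝ} (hN : 0 ≤ N) (hX : X ≠ 0) :
    0 ≤ N / (N + X ^ 2) ∧ N / (N + X ^ 2) < 1 := by
  have hpos : 0 < N + X ^ 2 := by positivity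
  exact ⟨div_nonneg hN hpos.le, (div_lt_one hpos).mpr (by linarith [sq_pos_of_ne_zero hX])⟩

theorem stmt_11_general (sT sC : ℕ) (hsT : 1 ≤ sT) (hsC : 2 ≤ sC) (σ τ : ℝ) (hτ : 0 < τ)
    (hcond : σ > Real.sqrt 2 * τ * ((sC : ℝ) - 1) / Real.sqrt ((sC : ℝ) ^ 2 / (sT : ℝ) + (sC : ℝ))) :
    0 ≤ 4 * σ ^ 2 * ((sC : ℝ) - 1) * (sC : ℝ) ^ 2 * (sT : ℝ) * ((sT : ℝ) + 1) *
          ((sC : ℝ) * (σ ^ 2 + 2 * τ ^ 2) - 2 * τ ^ 2) /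
        (-(sC : ℝ) * (σ ^ 2 + 4 * τ ^ 2) * (sT : ℝ) +
            (sC : ℝ) ^ 2 * (σ ^ 2 + 2 * (σ ^ 2 + τ ^ 2) * (sT : ℝ)) + 2 * τ ^ 2 * (sT : ℝ)) ^ 2 ∧
      4 * σ ^ 2 * ((sC : ℝ) - 1) * (sC : ℝ) ^ 2 * (sT : ℝ) * ((sT : ℝ) + 1) *
          ((sC : ℝ) * (σ ^ 2 + 2 * τ ^ 2) - 2 * τ ^ 2) /
        (-(sC : ℝ) * (σ ^ 2 + 4 * τ ^ 2) * (sT : ℝ) +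
            (sC : ℝ) ^ 2 * (σ ^ 2 + 2 * (σ ^ 2 + τ ^ 2) * (sT : ℝ)) + 2 * τ ^ 2 * (sT : ℝ)) ^ 2 < 1 := by
  have hc : (1 : ℝ) ≤ sC := by exact_mod_cast one_le_two.trans hsC
  have ht : (0 : ℝ) < sT := by exact_mod_cast hsT
  rw [rho_denom_sq_eq]
  exact div_add_sq_nonneg_and_lt_one (rho_num_nonneg hc ht.le σ τ) (rho_gap_pos hc ht hτ.le hcond).ne'

theorem stmt_11 (sT sC : ℕ) (hsT : 1 ≤ sT) (hsC : 2 ≤ sC) (σ τ : ℝ) (hσ : 0 < σ) (hτ : 0 < τ)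
    (hcond : σ > Real.sqrt 2 * τ * ((sC : ℝ) - 1) / Real.sqrt ((sC : ℝ) ^ 2 / (sT : ℝ) + (sC : ℝ))) :
    0 ≤ 4 * σ ^ 2 * ((sC : ℝ) - 1) * (sC : ℝ) ^ 2 * (sT : ℝ) * ((sT : ℝ) + 1) *
          ((sC : ℝ) * (σ ^ 2 + 2 * τ ^ 2) - 2 * τ ^ 2) /
        (-(sC : ℝ) * (σ ^ 2 + 4 * τ ^ 2) * (sT : ℝ) +
            (sC : ℝ) ^ 2 * (σ ^ 2 + 2 * (σ ^ 2 + τ ^ 2) * (sT : ℝ)) + 2 * τ ^ 2 * (sT : ℝ)) ^ 2 ∧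
      4 * σ ^ 2 * ((sC : ℝ) - 1) * (sC : ℝ) ^ 2 * (sT : ℝ) * ((sT : ℝ) + 1) *
          ((sC : ℝ) * (σ ^ 2 + 2 * τ ^ 2) - 2 * τ ^ 2) /
        (-(sC : ℝ) * (σ ^ 2 + 4 * τ ^ 2) * (sT : ℝ) +
            (sC : ℝ) ^ 2 * (σ ^ 2 + 2 * (σ ^ 2 + τ ^ 2) * (sT : ℝ)) + 2 * τ ^ 2 * (sT : ℝ)) ^ 2 < 1 :=
  stmt_11_general sT sC hsT hsC σ τ hτ hcond
end

section
/- Let σ > 0 and integer s ≥ 2 satisfy σ > (s−1)/√s. Then ρ = σ²·s·(s²−1)·((σ²+2)s−2) / (s·((σ²+1)s−2) + 1)² satisfies 0 < ρ < 1. -/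
theorem stmt_14 (s : ℕ) (hs : 2 ≤ s) (σ : ℝ) (hσ : σ > ((s : ℝ) - 1) / Real.sqrt (s : ℝ)) :
    0 < σ ^ 2 * (s : ℝ) * ((s : ℝ) ^ 2 - 1) * ((σ ^ 2 + 2) * (s : ℝ) - 2) /
        ((s : ℝ) * ((σ ^ 2 + 1) * (s : ℝ) - 2) + 1) ^ 2 ∧
    σ ^ 2 * (s : ℝ) * ((s : ℝ) ^ 2 - 1) * ((σ ^ 2 + 2) * (s : ℝ) - 2) /
        ((s : ℝ) * ((σ ^ 2 + 1) * (s : ℝ) - 2) + 1) ^ 2 < 1 := by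
  set n : ℝ := (s : ℝ) with hn
  have hn2 : (2 : ℝ) ≤ n := by rw [hn]; exact_mod_cast hs
  have hnpos : (0 : ℝ) < n := by linarith
  have hsq : Real.sqrt n > 0 := Real.sqrt_pos.mpr hnpos
  have hσ0 : 0 < σ := lt_of_le_of_lt (div_nonneg (by linarith) hsq.le) hσ
  -- key: σ^2 * n > (n-1)^2
  have hkey : (n - 1) ^ 2 < σ ^ 2 * n := by
    have h1 : (n - 1) / Real.sqrt n < σ := hσ
    have h2 : ((n - 1) / Real.sqrt n) ^ 2 < σ ^ 2 := by
      apply pow_lt_pow_left₀ h1 (div_nonneg (by linarith) hsq.le) (by norm_num)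
    have h3 : ((n - 1) / Real.sqrt n) ^ 2 = (n - 1) ^ 2 / n := by
      rw [div_pow, Real.sq_sqrt hnpos.le]
    rw [h3] at h2
    calc (n - 1) ^ 2 = (n - 1) ^ 2 / n * n := by field_simp
    _ < σ ^ 2 * n := by exact mul_lt_mul_of_pos_right h2 hnpos
  have hσ2 : 0 < σ ^ 2 := by positivity
  have hNpos : 0 < σ ^ 2 * n * (n ^ 2 - 1) * ((σ ^ 2 + 2) * n - 2) := by
    have h1 : 0 < n ^ 2 - 1 := by nlinarith
    have h2 : 0 < (σ ^ 2 + 2) * n - 2 := by nlinarith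
    positivity
  have hDpos : 0 < n * ((σ ^ 2 + 1) * n - 2) + 1 := by nlinarith
  have hD2 : 0 < (n * ((σ ^ 2 + 1) * n - 2) + 1) ^ 2 := by positivity
  constructor
  · exact div_pos hNpos hD2
  · rw [div_lt_one hD2]
    have hk := mul_pos (sub_pos.mpr hkey) (sub_pos.mpr hkey)
    nlinarith [hk]
end

section
/- Let q > 1 and n > 2(q²+2) + 2·√(q⁴+4q²). Then for σ = β·(√n·q + n − 2)/(√2·√(√n·q + n)) with β > 1, and for any integers s_C, s_T with n/2 − q·√(n/4) < s_C, s_T < n/2 + q·√(n/4) and s_C ≥ 2, the condition σ > √2·(s_C−1)/√(s_C²/s_T + s_C) holds. -/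
private lemma key_poly (A x t : ℝ) (hx : 2 ≤ x) (ht : 1 ≤ t) (hxA : 2*x < A) (htA : 2*t < A) :
    4*A*(x-1)^2*t ≤ (A-2)^2*(x^2+x*t) := by
  nlinarith [mul_nonneg (sub_nonneg.2 hxA.le) (sub_nonneg.2 htA.le), sq_nonneg (x-t),
    mul_nonneg (sub_nonneg.2 hxA.le) (sub_nonneg.2 (by linarith : (1:ℝ) ≤ x)),
    mul_nonneg (sub_nonneg.2 htA.le) (sub_nonneg.2 (by linarith : (1:ℝ) ≤ x)),
    sq_nonneg (A-2*x), sq_nonneg (A-2*t),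
    mul_pos (by linarith : (0:ℝ) < x) (by linarith : (0:ℝ) < t)]

private lemma main_ineq (β A x t : ℝ) (hβ : 1 < β) (hA4 : 4 < A) (hx2 : 2 ≤ x)
    (ht1 : 1 ≤ t) (hxA : 2*x < A) (htA : 2*t < A) :
    β * (A - 2) / (Real.sqrt 2 * Real.sqrt A) >
      Real.sqrt 2 * (x - 1) / Real.sqrt (x^2/t + x) := by
  have ht0 : (0:ℝ) < t := by linarith
  have hx0 : (0:ℝ) < x := by linarith
  have hD0 : (0:ℝ) < x^2/t + x := by positivity
  have hDeq : x^2/t + x = (x^2 + x*t)/t := by field_simp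
  have hpoly := key_poly A x t hx2 ht1 hxA htA
  have h1 : 4*(x-1)^2*A ≤ (A-2)^2*(x^2/t + x) := by
    rw [hDeq, ← mul_div_assoc, le_div_iff₀ ht0]
    nlinarith [hpoly]
  have hA0 : (0:ℝ) < A := by linarith
  have hsA : (Real.sqrt A)^2 = A := Real.sq_sqrt hA0.le
  have hsD : (Real.sqrt (x^2/t + x))^2 = x^2/t + x := Real.sq_sqrt hD0.le
  have hL0 : 0 ≤ 2*(x-1)*Real.sqrt A :=
    mul_nonneg (by nlinarith) (Real.sqrt_nonneg _)
  have hR0 : 0 ≤ (A-2)*Real.sqrt (x^2/t + x) :=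
    mul_nonneg (by linarith) (Real.sqrt_nonneg _)
  have hstep : 2*(x-1)*Real.sqrt A ≤ (A-2)*Real.sqrt (x^2/t + x) := by
    have hsq : (2*(x-1)*Real.sqrt A)^2 ≤ ((A-2)*Real.sqrt (x^2/t + x))^2 := by
      have e1 : (2*(x-1)*Real.sqrt A)^2 = 4*(x-1)^2*(Real.sqrt A)^2 := by ring
      have e2 : ((A-2)*Real.sqrt (x^2/t + x))^2
          = (A-2)^2*(Real.sqrt (x^2/t + x))^2 := by ring
      rw [e1, e2, hsA, hsD]; exact h1
    have h := Real.sqrt_le_sqrt hsq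
    rwa [Real.sqrt_sq hL0, Real.sqrt_sq hR0] at h
  have hsA0 : 0 < Real.sqrt A := Real.sqrt_pos.2 hA0
  have hsD0 : 0 < Real.sqrt (x^2/t + x) := Real.sqrt_pos.2 hD0
  have hs20 : 0 < Real.sqrt 2 := Real.sqrt_pos.2 (by norm_num)
  have h22 : Real.sqrt 2 * Real.sqrt 2 = 2 := Real.mul_self_sqrt (by norm_num)
  have hmid : Real.sqrt 2 * (x-1) / Real.sqrt (x^2/t + x)
      ≤ (A-2) / (Real.sqrt 2 * Real.sqrt A) := by
    rw [div_le_div_iff₀ hsD0 (by positivity)]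
    calc Real.sqrt 2 * (x-1) * (Real.sqrt 2 * Real.sqrt A)
        = (Real.sqrt 2 * Real.sqrt 2) * ((x-1) * Real.sqrt A) := by ring
      _ = 2*(x-1)*Real.sqrt A := by rw [h22]; ring
      _ ≤ (A-2)*Real.sqrt (x^2/t + x) := hstep
  have hSpos : 0 < (A-2) / (Real.sqrt 2 * Real.sqrt A) := by
    apply div_pos (by linarith) (by positivity)
  have hfin : (A-2) / (Real.sqrt 2 * Real.sqrt A)
      < β * (A-2) / (Real.sqrt 2 * Real.sqrt A) := by
    rw [mul_div_assoc]
    nlinarith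
  exact lt_of_le_of_lt hmid hfin

theorem stmt_18 (q β : ℝ) (hq : q > 1) (hβ : β > 1) (n : ℕ)
    (hn : (n : ℝ) > 2 * (q ^ 2 + 2) + 2 * Real.sqrt (q ^ 4 + 4 * q ^ 2))
    (sC sT : ℕ) (hsC2 : 2 ≤ sC)
    (hsCl : (n : ℝ) / 2 - q * Real.sqrt ((n : ℝ) / 4) < (sC : ℝ))
    (hsCu : (sC : ℝ) < (n : ℝ) / 2 + q * Real.sqrt ((n : ℝ) / 4))
    (hsTl : (n : ℝ) / 2 - q * Real.sqrt ((n : ℝ) / 4) < (sT : ℝ))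
    (hsTu : (sT : ℝ) < (n : ℝ) / 2 + q * Real.sqrt ((n : ℝ) / 4)) :
    β * (Real.sqrt n * q + (n : ℝ) - 2) / (Real.sqrt 2 * Real.sqrt (Real.sqrt n * q + (n : ℝ))) >
      Real.sqrt 2 * ((sC : ℝ) - 1) / Real.sqrt ((sC : ℝ) ^ 2 / (sT : ℝ) + (sC : ℝ)) := by
  have hn0 : (0:ℝ) ≤ (n:ℝ) := Nat.cast_nonneg n
  have hs0 : 0 ≤ Real.sqrt n := Real.sqrt_nonneg _
  have hs2 : (Real.sqrt n)^2 = n := Real.sq_sqrt hn0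
  have hroot : (0:ℝ) ≤ Real.sqrt (q ^ 4 + 4 * q ^ 2) := Real.sqrt_nonneg _
  have hn6 : (6:ℝ) < n := by nlinarith
  have hsq4 : Real.sqrt ((n:ℝ)/4) = Real.sqrt n / 2 := by
    rw [show (n:ℝ)/4 = (n:ℝ)/2^2 by ring, Real.sqrt_div hn0,
      Real.sqrt_sq (by norm_num : (0:ℝ) ≤ 2)]
  rw [hsq4] at hsCu hsTl
  have hqs : q < Real.sqrt n := by nlinarith
  have hx2 : (2:ℝ) ≤ (sC:ℝ) := by exact_mod_cast hsC2
  have hxA : 2 * (sC:ℝ) < Real.sqrt n * q + n := by nlinarith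
  have htA : 2 * (sT:ℝ) < Real.sqrt n * q + n := by nlinarith
  have ht0 : (0:ℝ) < (sT:ℝ) := by nlinarith
  have ht1 : (1:ℝ) ≤ (sT:ℝ) := by
    have : 0 < sT := Nat.cast_pos.mp ht0
    exact_mod_cast this
  have hA4 : (4:ℝ) < Real.sqrt n * q + n := by nlinarith
  exact main_ineq β (Real.sqrt n * q + n) (sC:ℝ) (sT:ℝ) hβ hA4 hx2 ht1 hxA htA
end
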